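/- Let i, j, k be positive integers and x ∈ {0,1}^ℕ, and set y = τ^i σ^j τ^k(x). Then the words of length 2 occurring in y belong to {00, 01, 10}, and the difference between two successive occurrences in y of any word of length 2 occurring in y is at most 2·max{i,j,k} + 3. In particular, the differences between successive occurrences of 01 and of 10 are at most i+2, and those of 00 are at most 2j+3 if i = 1 and at most 3 if i ≥ 2. The same bound 2·max{i,j,k}+3 holds for y = σ^i τ^j σ^k(x). -/

import Mathlib

/-!
Write `τ = θ₀` and `σ = θ₁`, where `θₐ` inserts an `a` after every letter other than `a`.
One application of `θₐ` pushes the letters other than `a` one position further apart and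
lengthens the runs of `a` by at most one. Hence, with `{a, b} = {0, 1}`: in `v = θₐᵏ(x)` no two
`b`s are adjacent; in `w = θ_bʲ(v)` every `a` is followed by at least `j` letters `b` and the
runs of `b` have length at most `j + 1`; and in `y = θₐⁱ(w)` every `b` is followed by at least
`i` letters `a` while the runs of `a` have length at most `i + 1`. This bounds the gaps of `ab`
and `ba` by `i + 2`, and those of `aa` by `3` when `i ≥ 2`. When `i = 1` the occurrences of `aa`
in `y` come from the factors `ba` of `w`, which gives the bound `2j + 3`. The case `σⁱτʲσᵏ` is
the case `τⁱσʲτᵏ` with the letters exchanged.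
-/

namespace DurandLR

variable {A B : Type*}

/-- `u` occurs at position `i` in the one-sided sequence `x`. -/
def OccursAt (x : ℕ → A) (u : List A) (i : ℕ) : Prop :=
  ∀ k : Fin u.length, x (i + (k : ℕ)) = u.get k

/-- `u` occurs (somewhere) in the one-sided sequence `x`. -/
def Occurs (x : ℕ → A) (u : List A) : Prop := ∃ i, OccursAt x u i

/-- `u` occurs at position `i` in the two-sided sequence `x`. -/
def OccursAtZ (x : ℤ → A) (u : List A) (i : ℤ) : Prop :=
  ∀ k : Fin u.length, x (i + (k : ℕ)) = u.get k

def OccursZ (x : ℤ → A) (u : List A) : Prop := ∃ i, OccursAtZ x u i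

/-- The word `u` has exactly `m` occurrences in the finite word `w`. -/
def OccCountEq (u w : List A) (m : ℕ) : Prop :=
  {i : ℕ | u <+: w.drop i}.ncard = m

/-- `w` is a return word to `u` in the one-sided sequence `x`: `wu` occurs in `x`,
`u` is a prefix of `wu` and `u` has exactly two occurrences in `wu`. -/
def IsReturnWord (x : ℕ → A) (u w : List A) : Prop :=
  Occurs x (w ++ u) ∧ u <+: (w ++ u) ∧ OccCountEq u (w ++ u) 2

/-- `w` is a return word to `u` in the two-sided sequence `x`. -/
def IsReturnWordZ (x : ℤ → A) (u w : List A) : Prop :=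
  OccursZ x (w ++ u) ∧ u <+: (w ++ u) ∧ OccCountEq u (w ++ u) 2

/-- `x` is uniformly recurrent: every word occurring in `x` occurs with bounded gaps. -/
def UniformlyRecurrent (x : ℕ → A) : Prop :=
  ∀ u, Occurs x u → ∃ M : ℕ, ∀ i : ℕ, ∃ j, i ≤ j ∧ j < i + M ∧ OccursAt x u j

def UniformlyRecurrentZ (x : ℤ → A) : Prop :=
  ∀ u, OccursZ x u → ∃ M : ℕ, ∀ i : ℤ, ∃ j : ℤ, i ≤ j ∧ j < i + M ∧ OccursAtZ x u j

/-- `x` is linearly recurrent with constant `K`. -/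
def LinearlyRecurrentWith (x : ℕ → A) (K : ℕ) : Prop :=
  UniformlyRecurrent x ∧ ∀ u w, IsReturnWord x u w → w.length ≤ K * u.length

def LinearlyRecurrent (x : ℕ → A) : Prop := ∃ K, LinearlyRecurrentWith x K

def LinearlyRecurrentZ (x : ℤ → A) : Prop :=
  UniformlyRecurrentZ x ∧ ∃ K : ℕ, ∀ u w, IsReturnWordZ x u w → w.length ≤ K * u.length

/-- The subshift generated by a two-sided sequence `x` : all `z` whose finite subwords
occur in `x`. -/
def SubshiftGenZ (x : ℤ → A) : Set (ℤ → A) := {z | ∀ u, OccursZ z u → OccursZ x u}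

/-- The subshift generated by a one-sided sequence `x`. -/
def SubshiftGen (x : ℕ → A) : Set (ℤ → A) := {z | ∀ u, OccursZ z u → Occurs x u}

/-- A minimal subshift: nonempty and every element generates it. -/
def IsMinimalSubshift (X : Set (ℤ → A)) : Prop :=
  X.Nonempty ∧ ∀ z ∈ X, X = SubshiftGenZ z

/-- A linearly recurrent subshift: minimal and containing an LR sequence. -/
def IsLRSubshift (X : Set (ℤ → A)) : Prop :=
  IsMinimalSubshift X ∧ ∃ x ∈ X, LinearlyRecurrentZ x

def IsPeriodic (z : ℤ → A) : Prop := ∃ p : ℕ, 0 < p ∧ ∀ n : ℤ, z (n + p) = z n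

/-- Image of a finite word under a morphism (substitution). -/
def wordMap (σ : A → List B) : List A → List B
  | [] => []
  | a :: u => σ a ++ wordMap σ u

/-- Composition of two morphisms: `compM σ τ = σ ∘ τ`. -/
def compM (σ τ : A → List A) : A → List A := fun b => wordMap σ (τ b)

/-- Iterate of a morphism: `powM σ n = σ^n`. -/
def powM (σ : A → List A) : ℕ → A → List A
  | 0 => fun b => [b]
  | n + 1 => compM σ (powM σ n)

/-- `chain σ r n = σ_r ∘ σ_{r+1} ∘ ⋯ ∘ σ_{r+n-1}` (the empty composition for `n = 0`). -/
def chain (σ : ℕ → A → List A) (r : ℕ) : ℕ → A → List A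
  | 0 => fun b => [b]
  | n + 1 => fun b => wordMap (chain σ r n) (σ (r + n) b)

/-- The periodic infinite sequence `www⋯` obtained by repeating the word `w`
(with a default letter for the degenerate empty case). -/
def repSeq (w : List A) (d : A) : ℕ → A := fun i => w.getD (i % w.length) d

/-- The prefix of length `n` of the sequence `x`, as a word. -/
def seqTake (x : ℕ → A) (n : ℕ) : List A := (List.range n).map x

/-- `y` is the image of the infinite sequence `z` under the morphism `σ`:
the image of every prefix of `z` is a prefix of `y`. -/
def IsSeqImage (σ : A → List B) (z : ℕ → A) (y : ℕ → B) : Prop :=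
  ∀ n, seqTake y (wordMap σ (seqTake z n)).length = wordMap σ (seqTake z n)

/-- `σ_0 σ_1 ⋯ σ_n (aaa⋯)` converges to `x` in the product topology, where the `n`-th
approximation is the periodic sequence obtained by repeating the word `W n`. -/
def ConvergesTo (W : ℕ → List A) (d : A) (x : ℕ → A) : Prop :=
  ∀ m, ∃ N, ∀ n ≥ N, repSeq (W n) d m = x m

/-- A proper morphism: all images begin with the same letter and end with the same letter. -/
def ProperMorphism (σ : A → List A) : Prop :=
  ∃ l r : A, ∀ b, (σ b).head? = some l ∧ (σ b).getLast? = some r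

/-- Primitivity with constant `s₀` of a directive sequence of morphisms
`σ_n : A_{n+1} → A_n^*`: every `b ∈ A_r` occurs in `σ_{r+1} ⋯ σ_{r+s₀} (c)`
for every `c ∈ A_{r+s₀+1}`. -/
def PrimitiveWith (σ : ℕ → A → List A) (Aseq : ℕ → Set A) (s0 : ℕ) : Prop :=
  ∀ r : ℕ, ∀ b ∈ Aseq r, ∀ c ∈ Aseq (r + s0 + 1), b ∈ chain σ (r + 1) s0 c

/-- The data of an S-adic system: `a` belongs to every alphabet and
`σ_n` maps `A_{n+1}` into words over `A_n`. -/
def SAdicSystem (σ : ℕ → A → List A) (Aseq : ℕ → Set A) (a : A) : Prop :=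
  (∀ n, a ∈ Aseq n) ∧ (∀ n, ∀ b ∈ Aseq (n + 1), ∀ c ∈ σ n b, c ∈ Aseq n)

/-- `x` is the S-adic sequence generated by the directive sequence `σ` and letter `a`:
`σ_0 σ_1 ⋯ σ_n (aaa⋯)` converges to `x`. -/
def GeneratesSAdic (σ : ℕ → A → List A) (Aseq : ℕ → Set A) (a : A) (x : ℕ → A) : Prop :=
  SAdicSystem σ Aseq a ∧ ConvergesTo (fun n => chain σ 0 (n + 1) a) a x

/-- The complexity function `p_x(n)`: the number of distinct words of length `n`
occurring in `x`. -/
noncomputable def complexity (x : ℕ → A) (n : ℕ) : ℕ := {u : List A | u.length = n ∧ Occurs x u}.ncard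

/-- Any two successive occurrences of `u` in `x` differ by at most `M`. -/
def GapsBoundedBy (x : ℕ → A) (u : List A) (M : ℕ) : Prop :=
  ∀ i j, OccursAt x u i → OccursAt x u j → i < j →
    (∀ k, i < k → k < j → ¬ OccursAt x u k) → j - i ≤ M

/-- The finite word `x_{[p,q)}` of a two-sided sequence. -/
def zSeg (x : ℤ → A) (p q : ℤ) : List A := (List.range (q - p).toNat).map fun t => x (p + t)

/-- `w` is a return word to `u.v` in the two-sided sequence `x`: there are two
consecutive occurrences `j < k` of `uv` in `x` with `w = x_{[j+|u|, k+|u|)}`. -/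
def IsReturnWordUV (x : ℤ → A) (u v w : List A) : Prop :=
  ∃ j k : ℤ, OccursAtZ x (u ++ v) j ∧ OccursAtZ x (u ++ v) k ∧ j < k ∧
    (∀ i : ℤ, j < i → i < k → ¬ OccursAtZ x (u ++ v) i) ∧
    w = zSeg x (j + u.length) (k + u.length)

/-- The substitution `σ` on `{a,b,c} = {0,1,2}`: `σ(a)=acb`, `σ(b)=bab`, `σ(c)=cbc`. -/
def sigma3 : Fin 3 → List (Fin 3) := ![[0, 2, 1], [1, 0, 1], [2, 1, 2]]

/-- The substitution `τ` on `{a,b,c} = {0,1,2}`: `τ(a)=abc`, `τ(b)=acb`, `τ(c)=aac`. -/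
def tau3 : Fin 3 → List (Fin 3) := ![[0, 1, 2], [0, 2, 1], [0, 0, 2]]

/-- `rho n = σ τ σ² τ ⋯ σⁿ τ` (identity for `n = 0`). -/
def rho : ℕ → Fin 3 → List (Fin 3)
  | 0 => fun b => [b]
  | n + 1 => compM (rho n) (compM (powM sigma3 (n + 1)) tau3)

/-- `psi n l = σ^{n+2} τ σ^{n+3} τ ⋯ σ^{n+l+1} τ` (identity for `l = 0`). -/
def psi (n : ℕ) : ℕ → Fin 3 → List (Fin 3)
  | 0 => fun b => [b]
  | l + 1 => compM (psi n l) (compM (powM sigma3 (n + 2 + l)) tau3)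

/-- The Sturmian substitution `τ` on `{0,1}`: `τ(0)=0`, `τ(1)=10`. -/
def tau2 : Fin 2 → List (Fin 2) := ![[0], [1, 0]]

/-- The Sturmian substitution `σ` on `{0,1}`: `σ(0)=01`, `σ(1)=1`. -/
def sigma2 : Fin 2 → List (Fin 2) := ![[0, 1], [1]]

/-- `xi i k = τ^{i₁} σ^{i₂} τ^{i₃} ⋯ τ^{i_{2k-1}} σ^{i_{2k}}` (identity for `k = 0`). -/
def xi (i : ℕ → ℕ) : ℕ → Fin 2 → List (Fin 2)
  | 0 => fun b => [b]
  | k + 1 => compM (xi i k) (compM (powM tau2 (i (2 * k + 1))) (powM sigma2 (i (2 * k + 2))))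

/-- `a : ℕ → ℕ` gives (from index 1 on) the continued fraction expansion
`α = [0; a₁, a₂, a₃, …]`, expressed through the Gauss map. -/
def IsCFExpansion (α : ℝ) (a : ℕ → ℕ) : Prop :=
  ∃ β : ℕ → ℝ, β 0 = α ∧ ∀ n : ℕ,
    0 < β n ∧ β n < 1 ∧ (a (n + 1) : ℤ) = ⌊1 / β n⌋ ∧ β (n + 1) = 1 / β n - ⌊1 / β n⌋


section SeqImage

lemma wordMap_append (g : A → List B) (u v : List A) :
    wordMap g (u ++ v) = wordMap g u ++ wordMap g v := by
  induction u with
  | nil => rfl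
  | cons a u ih => simp [wordMap, ih]

lemma wordMap_compM (f g : A → List A) (l : List A) :
    wordMap (compM f g) l = wordMap f (wordMap g l) := by
  induction l with
  | nil => rfl
  | cons a l ih => simp [wordMap, compM, wordMap_append, ih]

lemma wordMap_prefix (g : A → List B) {u v : List A} (h : u <+: v) :
    wordMap g u <+: wordMap g v := by
  obtain ⟨t, rfl⟩ := h
  rw [wordMap_append]
  exact List.prefix_append _ _

lemma length_le_length_wordMap {g : A → List B} (hg : ∀ a, g a ≠ []) (l : List A) :
    l.length ≤ (wordMap g l).length := by
  induction l with
  | nil => simp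
  | cons a l ih =>
    have := List.length_pos_of_ne_nil (hg a)
    simp only [wordMap, List.length_append, List.length_cons]
    omega

lemma wordMap_singleton (l : List A) : wordMap (fun a => [a]) l = l := by
  induction l with
  | nil => rfl
  | cons a l ih => simp [wordMap, ih]

lemma powM_one (g : A → List A) : powM g 1 = g := by
  funext a
  simp [powM, compM, wordMap]

lemma wordMap_ne_nil {g : A → List B} (hg : ∀ a, g a ≠ []) {l : List A} (hl : l ≠ []) :
    wordMap g l ≠ [] := by
  obtain ⟨c, l, rfl⟩ := List.exists_cons_of_ne_nil hl
  simp [wordMap, hg c]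

lemma powM_ne_nil {g : A → List A} (hg : ∀ a, g a ≠ []) (n : ℕ) (a : A) : powM g n a ≠ [] := by
  induction n generalizing a with
  | zero => simp [powM]
  | succ n ih => exact wordMap_ne_nil hg (ih a)

@[simp]
lemma length_seqTake (x : ℕ → A) (n : ℕ) : (seqTake x n).length = n := by
  simp [seqTake]

lemma seqTake_succ (x : ℕ → A) (n : ℕ) : seqTake x (n + 1) = seqTake x n ++ [x n] := by
  simp [seqTake, List.range_succ]

lemma seqTake_prefix (x : ℕ → A) {m n : ℕ} (h : m ≤ n) : seqTake x m <+: seqTake x n := by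
  have : seqTake x m = (seqTake x n).take m := by
    rw [seqTake, seqTake, ← List.map_take, List.take_range, Nat.min_eq_left h]
  exact this ▸ List.take_prefix m (seqTake x n)

lemma seqTake_length_eq_iff {y : ℕ → A} {w : List A} :
    seqTake y w.length = w ↔ ∀ s (hs : s < w.length), y s = w[s] := by
  constructor
  · rintro h s hs
    simpa [seqTake] using List.getElem_of_eq h (by simpa using hs)
  · intro h
    exact List.ext_getElem (by simp) fun s hs _ => by simp [seqTake, h s (by simpa using hs)]

lemma seqTake_length_eq_of_prefix {y : ℕ → A} {w w' : List A} (h : w <+: w')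
    (h' : seqTake y w'.length = w') : seqTake y w.length = w :=
  seqTake_length_eq_iff.2 fun s hs =>
    (seqTake_length_eq_iff.1 h' s (lt_of_lt_of_le hs h.length_le)).trans (h.getElem hs).symm

lemma exists_seqTake_eq_of_prefix_chain [Inhabited A] (W : ℕ → List A)
    (hW : ∀ m n, m ≤ n → W m <+: W n) (hlen : ∀ n, n ≤ (W n).length) :
    ∃ z : ℕ → A, ∀ n, seqTake z (W n).length = W n := by
  refine ⟨fun s => (W (s + 1)).getD s default, fun n => seqTake_length_eq_iff.2 fun s hs => ?_⟩
  have hs' : s < (W (s + 1)).length := hlen (s + 1)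
  rw [List.getD_eq_getElem _ _ hs']
  rcases le_total (s + 1) n with h | h
  · exact (hW _ _ h).getElem hs'
  · exact ((hW _ _ h).getElem hs).symm

lemma IsSeqImage.exists_of_compM [Inhabited A] {f g : A → List A} (hg : ∀ a, g a ≠ [])
    {x y : ℕ → A} (h : IsSeqImage (compM f g) x y) :
    ∃ z, IsSeqImage g x z ∧ IsSeqImage f z y := by
  have hlen : ∀ n, n ≤ (wordMap g (seqTake x n)).length := fun n => by
    simpa using length_le_length_wordMap hg (seqTake x n)
  obtain ⟨z, hz⟩ := exists_seqTake_eq_of_prefix_chain (fun n => wordMap g (seqTake x n))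
    (fun m n hmn => wordMap_prefix g (seqTake_prefix x hmn)) hlen
  refine ⟨z, hz, fun n => ?_⟩
  have hpre : seqTake z n <+: wordMap g (seqTake x n) := hz n ▸ seqTake_prefix z (hlen n)
  refine seqTake_length_eq_of_prefix (wordMap_prefix f hpre) ?_
  simpa [wordMap_compM] using h n

lemma IsSeqImage.induction_powM [Inhabited A] {g : A → List A} (hg : ∀ a, g a ≠ [])
    (P : ℕ → (ℕ → A) → Prop) (step : ∀ n z y, P n z → IsSeqImage g z y → P (n + 1) y)
    {x y : ℕ → A} (hx : P 0 x) {n : ℕ} (h : IsSeqImage (powM g n) x y) : P n y := by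
  induction n generalizing y with
  | zero =>
    have : y = x := funext fun s => by
      simpa [seqTake, powM, wordMap_singleton] using seqTake_length_eq_iff.1 (h (s + 1)) s
    exact this ▸ hx
  | succ n ih =>
    obtain ⟨z, hz, hy⟩ := IsSeqImage.exists_of_compM (powM_ne_nil hg n) h
    exact step n z y (ih hz) hy

end SeqImage

section Blocks

variable {g : A → List B} {z : ℕ → A} {y : ℕ → B}

def blockStart (g : A → List B) (z : ℕ → A) (n : ℕ) : ℕ := (wordMap g (seqTake z n)).length

@[simp]
lemma blockStart_zero : blockStart g z 0 = 0 := rfl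

lemma blockStart_succ (n : ℕ) :
    blockStart g z (n + 1) = blockStart g z n + (g (z n)).length := by
  simp [blockStart, seqTake_succ, wordMap_append, wordMap]

lemma le_blockStart_add (hg : ∀ a, g a ≠ []) (n e : ℕ) :
    blockStart g z n + e ≤ blockStart g z (n + e) := by
  induction e with
  | zero => rfl
  | succ e ih =>
    have := List.length_pos_of_ne_nil (hg (z (n + e)))
    rw [← Nat.add_assoc n e 1, blockStart_succ]
    omega

lemma blockStart_mono (hg : ∀ a, g a ≠ []) {n n' : ℕ} (h : n ≤ n') :
    blockStart g z n ≤ blockStart g z n' := by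
  have := le_blockStart_add (z := z) hg n (n' - n)
  rw [Nat.add_sub_cancel' h] at this
  omega

lemma exists_eq_blockStart_add (hg : ∀ a, g a ≠ []) (m : ℕ) :
    ∃ n t, t < (g (z n)).length ∧ m = blockStart g z n + t := by
  classical
  have hex : ∃ n, m < blockStart g z (n + 1) :=
    ⟨m, by simpa using le_blockStart_add (z := z) hg 0 (m + 1)⟩
  have hn := Nat.find_spec hex
  have hle : blockStart g z (Nat.find hex) ≤ m := by
    rcases hfind : Nat.find hex with _ | n
    · simp
    · exact not_lt.1 (Nat.find_min hex (m := n) (by omega))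
  rw [blockStart_succ] at hn
  exact ⟨Nat.find hex, m - blockStart g z (Nat.find hex), by omega, by omega⟩

lemma IsSeqImage.apply_blockStart_add (h : IsSeqImage g z y) (n : ℕ) {t : ℕ}
    (ht : t < (g (z n)).length) : y (blockStart g z n + t) = (g (z n))[t] := by
  have hw : wordMap g (seqTake z (n + 1)) = wordMap g (seqTake z n) ++ g (z n) := by
    simp [seqTake_succ, wordMap_append, wordMap]
  have hlt : blockStart g z n + t < (wordMap g (seqTake z (n + 1))).length := by
    rw [hw, List.length_append]
    exact Nat.add_lt_add_left ht _
  rw [seqTake_length_eq_iff.1 (h (n + 1)) _ hlt, List.getElem_of_eq hw,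
    List.getElem_append_right (by simp [blockStart])]
  simp [blockStart]

end Blocks

lemma exists_le_and_forall_lt_not {P : ℕ → Prop} {r : ℕ} (h : ∃ d ≤ r, P d) :
    ∃ d ≤ r, P d ∧ ∀ e < d, ¬ P e := by
  classical
  obtain ⟨d, hdr, hd⟩ := h
  exact ⟨Nat.find ⟨d, hd⟩, (Nat.find_min' _ hd).trans hdr, Nat.find_spec ⟨d, hd⟩,
    fun e he => Nat.find_min _ he⟩

section Runs

variable {a : A} {y : ℕ → A}

def OthersApart (y : ℕ → A) (a : A) (n : ℕ) : Prop :=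
  ∀ m m', m < m' → y m ≠ a → y m' ≠ a → m + n < m'

def RunsAtMost (y : ℕ → A) (a : A) (r : ℕ) : Prop :=
  ∀ m, ∃ d ≤ r, y (m + d) ≠ a

lemma othersApart_zero (y : ℕ → A) (a : A) : OthersApart y a 0 :=
  fun _ _ h _ _ => h

lemma OthersApart.mono {n n' : ℕ} (h : OthersApart y a n) (hn : n' ≤ n) : OthersApart y a n' :=
  fun m m' hm hym hym' => (Nat.add_le_add_left hn m).trans_lt (h m m' hm hym hym')

lemma OthersApart.apply_add {n : ℕ} (h : OthersApart y a n) {m t : ℕ} (hm : y m ≠ a)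
    (ht : 0 < t) (htn : t ≤ n) : y (m + t) = a := by
  by_contra hne
  have := h m (m + t) (by omega) hm hne
  omega

lemma OthersApart.runsAtMost {n : ℕ} (h : OthersApart y a n) (hn : 0 < n) {b : A} (hb : b ≠ a) :
    RunsAtMost y b 1 := by
  intro m
  by_cases hm : y m = b
  · refine ⟨1, le_rfl, ?_⟩
    rw [h.apply_add (hm ▸ hb) one_pos hn]
    exact hb.symm
  · exact ⟨0, zero_le_one, hm⟩

end Runs

section PadMorph

variable [DecidableEq A]

def padMorph (a c : A) : List A := if c = a then [c] else [c, a]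

lemma padMorph_ne_nil (a c : A) : padMorph a c ≠ [] := by
  unfold padMorph
  split_ifs <;> simp

lemma tau2_eq_padMorph : tau2 = padMorph 0 := by
  funext c
  fin_cases c <;> rfl

lemma sigma2_eq_padMorph : sigma2 = padMorph 1 := by
  funext c
  fin_cases c <;> rfl

variable {a : A} {y z : ℕ → A}

lemma length_padMorph_of_eq {c : A} (hc : c = a) : (padMorph a c).length = 1 := by
  simp [padMorph, hc]

lemma length_padMorph_of_ne {c : A} (hc : c ≠ a) : (padMorph a c).length = 2 := by
  simp [padMorph, hc]

lemma blockStart_padMorph_succ_of_eq {n : ℕ} (hn : z n = a) :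
    blockStart (padMorph a) z (n + 1) = blockStart (padMorph a) z n + 1 := by
  rw [blockStart_succ, length_padMorph_of_eq hn]

lemma blockStart_padMorph_succ_of_ne {n : ℕ} (hn : z n ≠ a) :
    blockStart (padMorph a) z (n + 1) = blockStart (padMorph a) z n + 2 := by
  rw [blockStart_succ, length_padMorph_of_ne hn]

lemma blockStart_padMorph_add_le (n e : ℕ) :
    blockStart (padMorph a) z (n + e) ≤ blockStart (padMorph a) z n + 2 * e := by
  induction e with
  | zero => rfl
  | succ e ih =>
    rw [← Nat.add_assoc n e 1]
    by_cases he : z (n + e) = a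
    · rw [blockStart_padMorph_succ_of_eq he]; omega
    · rw [blockStart_padMorph_succ_of_ne he]; omega

lemma blockStart_padMorph_add_of_forall_eq {n d : ℕ} (hd : ∀ e < d, z (n + e) = a) :
    blockStart (padMorph a) z (n + d) = blockStart (padMorph a) z n + d := by
  induction d with
  | zero => rfl
  | succ d ih =>
    rw [← Nat.add_assoc n d 1, blockStart_padMorph_succ_of_eq (hd d d.lt_succ_self),
      ih fun e he => hd e (he.trans d.lt_succ_self)]
    rfl

namespace IsSeqImage

lemma apply_blockStart_padMorph (h : IsSeqImage (padMorph a) z y) (n : ℕ) :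
    y (blockStart (padMorph a) z n) = z n := by
  have := h.apply_blockStart_add n (t := 0)
    (List.length_pos_of_ne_nil (padMorph_ne_nil a (z n)))
  by_cases hn : z n = a <;> simpa [padMorph, hn] using this

lemma apply_blockStart_padMorph_add_one (h : IsSeqImage (padMorph a) z y) {n : ℕ}
    (hn : z n ≠ a) : y (blockStart (padMorph a) z n + 1) = a := by
  simpa [padMorph, hn] using h.apply_blockStart_add n (t := 1) (by simp [padMorph, hn])

lemma exists_eq_blockStart_of_ne (h : IsSeqImage (padMorph a) z y) {m : ℕ} (hm : y m ≠ a) :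
    ∃ n, m = blockStart (padMorph a) z n ∧ z n ≠ a := by
  obtain ⟨n, t, ht, rfl⟩ := exists_eq_blockStart_add (z := z) (padMorph_ne_nil a) m
  rcases t with _ | t
  · exact ⟨n, rfl, fun hn => hm (hn ▸ h.apply_blockStart_padMorph n)⟩
  · by_cases hn : z n = a
    · rw [length_padMorph_of_eq hn] at ht
      omega
    · obtain rfl : t = 0 := by rw [length_padMorph_of_ne hn] at ht; omega
      exact absurd (h.apply_blockStart_padMorph_add_one hn) hm

end IsSeqImage

lemma OthersApart.of_isSeqImage_padMorph {n : ℕ} (hz : OthersApart z a n)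
    (h : IsSeqImage (padMorph a) z y) : OthersApart y a (n + 1) := by
  intro m m' hlt hm hm'
  obtain ⟨p, rfl, hp⟩ := h.exists_eq_blockStart_of_ne hm
  obtain ⟨p', rfl, hp'⟩ := h.exists_eq_blockStart_of_ne hm'
  have hpp' : p < p' := by
    by_contra hle
    exact (blockStart_mono (padMorph_ne_nil a) (not_lt.1 hle)).not_gt hlt
  have hgap := hz p p' hpp' hp hp'
  have hstep := blockStart_padMorph_succ_of_ne hp
  have hrest := le_blockStart_add (z := z) (padMorph_ne_nil a) (p + 1) (p' - (p + 1))
  rw [show p + 1 + (p' - (p + 1)) = p' by omega] at hrest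
  omega

lemma RunsAtMost.of_isSeqImage_padMorph {r : ℕ} (hz : RunsAtMost z a r)
    (h : IsSeqImage (padMorph a) z y) : RunsAtMost y a (r + 1) := by
  intro m
  obtain ⟨n, t, ht, rfl⟩ := exists_eq_blockStart_add (z := z) (padMorph_ne_nil a) m
  by_cases hfirst : z n ≠ a ∧ t = 0
  · refine ⟨0, by omega, ?_⟩
    rw [hfirst.2]
    simpa [h.apply_blockStart_padMorph] using hfirst.1
  have hnext : blockStart (padMorph a) z (n + 1) ≤ blockStart (padMorph a) z n + t + 1 := by
    by_cases hn : z n = a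
    · rw [length_padMorph_of_eq hn] at ht
      rw [blockStart_padMorph_succ_of_eq hn]; omega
    · have : t ≠ 0 := fun ht0 => hfirst ⟨hn, ht0⟩
      rw [blockStart_padMorph_succ_of_ne hn]; omega
  obtain ⟨d, hdr, hd, hbefore⟩ := exists_le_and_forall_lt_not (hz (n + 1))
  have hL := blockStart_padMorph_add_of_forall_eq (n := n + 1) fun e he => not_not.1 (hbefore e he)
  have hcur := blockStart_succ (g := padMorph a) (z := z) n
  refine ⟨blockStart (padMorph a) z (n + 1 + d) - (blockStart (padMorph a) z n + t), by omega, ?_⟩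
  rw [Nat.add_sub_cancel' (by omega), h.apply_blockStart_padMorph]
  exact hd

variable [Inhabited A] {n : ℕ}

lemma IsSeqImage.othersApart_powM_padMorph (h : IsSeqImage (powM (padMorph a) n) z y) :
    OthersApart y a n :=
  h.induction_powM (padMorph_ne_nil a) (fun n z => OthersApart z a n)
    (fun _ _ _ hz hzy => hz.of_isSeqImage_padMorph hzy) (othersApart_zero z a)

lemma RunsAtMost.of_isSeqImage_powM_padMorph {r : ℕ} (hz : RunsAtMost z a r)
    (h : IsSeqImage (powM (padMorph a) n) z y) : RunsAtMost y a (r + n) :=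
  h.induction_powM (padMorph_ne_nil a) (fun n z => RunsAtMost z a (r + n))
    (fun _ _ _ hz hzy => hz.of_isSeqImage_padMorph hzy) hz

end PadMorph

section Gaps

variable {y : ℕ → A}

lemma occursAt_pair_iff {c d : A} {p : ℕ} :
    OccursAt y [c, d] p ↔ y p = c ∧ y (p + 1) = d := by
  simp [OccursAt, Fin.forall_fin_two]

lemma gapsBoundedBy_of_forall_exists {u : List A} {M : ℕ}
    (h : ∀ p, OccursAt y u p → ∃ q, p < q ∧ q ≤ p + M ∧ OccursAt y u q) :
    GapsBoundedBy y u M := by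
  intro p q hp _ hpq hno
  obtain ⟨r, hpr, hrM, hr⟩ := h p hp
  by_contra hgap
  exact hno r hpr (by omega) hr

lemma GapsBoundedBy.mono {u : List A} {M M' : ℕ} (h : GapsBoundedBy y u M) (hM : M ≤ M') :
    GapsBoundedBy y u M' :=
  fun p q hp hq hpq hno => (h p q hp hq hpq hno).trans hM

variable {a : A}

lemma OthersApart.not_occursAt_pair (h : OthersApart y a 1) {b : A} (hb : b ≠ a) (p : ℕ) :
    ¬ OccursAt y [b, b] p := by
  rw [occursAt_pair_iff]
  rintro ⟨h0, h1⟩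
  have := h p (p + 1) p.lt_succ_self (h0 ▸ hb) (h1 ▸ hb)
  omega

lemma OthersApart.gapsBoundedBy_pair_three (h : OthersApart y a 2) : GapsBoundedBy y [a, a] 3 := by
  refine gapsBoundedBy_of_forall_exists fun p hp => ?_
  rw [occursAt_pair_iff] at hp
  by_cases h2 : y (p + 2) = a
  · exact ⟨p + 1, by omega, by omega, occursAt_pair_iff.2 ⟨hp.2, h2⟩⟩
  · exact ⟨p + 3, by omega, by omega,
      occursAt_pair_iff.2 ⟨h.apply_add h2 (t := 1) one_pos one_le_two,
        h.apply_add h2 (t := 2) two_pos le_rfl⟩⟩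

end Gaps

section TwoLetters

variable {a b : Fin 2} {y : ℕ → Fin 2} {r : ℕ}

lemma OthersApart.gapsBoundedBy_pair_right (hab : a ≠ b) (h : OthersApart y a 1)
    (hr : RunsAtMost y a r) : GapsBoundedBy y [b, a] (r + 1) := by
  refine gapsBoundedBy_of_forall_exists fun p _ => ?_
  obtain ⟨d, hdr, hd⟩ := hr (p + 1)
  exact ⟨p + 1 + d, by omega, by omega,
    occursAt_pair_iff.2 ⟨by omega, h.apply_add hd one_pos le_rfl⟩⟩

lemma OthersApart.gapsBoundedBy_pair_left (hab : a ≠ b) (h : OthersApart y a 1)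
    (hr : RunsAtMost y a r) : GapsBoundedBy y [a, b] (r + 1) := by
  refine gapsBoundedBy_of_forall_exists fun p _ => ?_
  obtain ⟨d, hdr, hd⟩ := hr (p + 2)
  have hprev : y (p + 1 + d) = a := by
    by_contra hne
    have := h (p + 1 + d) (p + 2 + d) (by omega) hne hd
    omega
  refine ⟨p + 1 + d, by omega, by omega, occursAt_pair_iff.2 ⟨hprev, ?_⟩⟩
  rw [show p + 1 + d + 1 = p + 2 + d by omega]
  omega

end TwoLetters

section PadMorphGaps

variable [DecidableEq A] {a b : A} {w y : ℕ → A}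

lemma IsSeqImage.exists_of_occursAt_pair_padMorph (h : IsSeqImage (padMorph a) w y)
    (hab : a ≠ b) (hw : OthersApart w b 1) {p : ℕ} (hp : OccursAt y [a, a] p) :
    ∃ n, p = blockStart (padMorph a) w n + 1 ∧ w n ≠ a ∧ w (n + 1) = a := by
  rw [occursAt_pair_iff] at hp
  obtain ⟨n, t, ht, rfl⟩ := exists_eq_blockStart_add (z := w) (padMorph_ne_nil a) p
  by_cases hn : w n = a
  · obtain rfl : t = 0 := by rw [length_padMorph_of_eq hn] at ht; omega
    have hn1 : w (n + 1) = a := by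
      rw [← h.apply_blockStart_padMorph, blockStart_padMorph_succ_of_eq hn]
      exact hp.2
    have := hw n (n + 1) n.lt_succ_self (hn ▸ hab) (hn1 ▸ hab)
    omega
  · obtain rfl : t = 1 := by
      rw [length_padMorph_of_ne hn] at ht
      have ht0 : t ≠ 0 := by
        rintro rfl
        exact hn (h.apply_blockStart_padMorph n ▸ hp.1)
      omega
    refine ⟨n, rfl, hn, ?_⟩
    rw [← h.apply_blockStart_padMorph, blockStart_padMorph_succ_of_ne hn]
    exact hp.2

lemma IsSeqImage.occursAt_pair_padMorph (h : IsSeqImage (padMorph a) w y) {n : ℕ}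
    (hn : w n ≠ a) (hn1 : w (n + 1) = a) :
    OccursAt y [a, a] (blockStart (padMorph a) w n + 1) := by
  refine occursAt_pair_iff.2 ⟨h.apply_blockStart_padMorph_add_one hn, ?_⟩
  rw [← blockStart_padMorph_succ_of_ne hn, h.apply_blockStart_padMorph, hn1]

end PadMorphGaps

/-- The occurrences of `aa` in `y` are the images of the factors `ba` of `w`; without `aa` in
`w` and with `b`-runs of length at most `r`, consecutive such factors are at most `r + 1`
letters apart. -/
lemma IsSeqImage.gapsBoundedBy_padMorph {a b : Fin 2} (hab : a ≠ b) {w y : ℕ → Fin 2} {r : ℕ}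
    (h : IsSeqImage (padMorph a) w y) (hw : OthersApart w b 1) (hrun : RunsAtMost w b r) :
    GapsBoundedBy y [a, a] (2 * r + 1) := by
  refine gapsBoundedBy_of_forall_exists fun p hp => ?_
  obtain ⟨n, rfl, hn, hn1⟩ := h.exists_of_occursAt_pair_padMorph hab hw hp
  have hn2 : w (n + 2) = b := by
    by_contra hne
    have := hw (n + 1) (n + 2) (by omega) (by rw [hn1]; exact hab) hne
    omega
  obtain ⟨d, hdr, hd, hbefore⟩ := exists_le_and_forall_lt_not (hrun (n + 2))
  obtain ⟨e, rfl⟩ : ∃ e, d = e + 1 :=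
    Nat.exists_eq_add_one.2 (Nat.pos_of_ne_zero (by rintro rfl; exact hd hn2))
  have he : w (n + 2 + e) ≠ a := by
    have := hbefore e (by omega)
    omega
  have he1 : w (n + 2 + e + 1) = a := by
    rw [← Nat.add_assoc] at hd
    omega
  have h2 : blockStart (padMorph a) w (n + 2) = blockStart (padMorph a) w n + 3 := by
    rw [blockStart_padMorph_succ_of_eq hn1, blockStart_padMorph_succ_of_ne hn]
  have hlo := le_blockStart_add (z := w) (padMorph_ne_nil a) (n + 2) e
  have hhi := blockStart_padMorph_add_le (z := w) (a := a) (n + 2) e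
  exact ⟨_, by omega, by omega, h.occursAt_pair_padMorph he he1⟩

section Sturmian

variable {a b : Fin 2} {i j k : ℕ} {x y : ℕ → Fin 2}

lemma IsSeqImage.sturmian_structure (hab : a ≠ b) (hj : 0 < j) (hk : 0 < k)
    (h : IsSeqImage
      (compM (powM (padMorph a) i) (compM (powM (padMorph b) j) (powM (padMorph a) k))) x y) :
    OthersApart y a i ∧ RunsAtMost y a (i + 1) ∧ (i = 1 → GapsBoundedBy y [a, a] (2 * j + 3)) := by
  have hne : ∀ (c : Fin 2) n d, powM (padMorph c) n d ≠ [] :=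
    fun c => powM_ne_nil (padMorph_ne_nil c)
  obtain ⟨w, hw, hy⟩ := h.exists_of_compM fun d => wordMap_ne_nil (hne b j) (hne a k d)
  obtain ⟨v, hv, hw⟩ := hw.exists_of_compM (hne a k)
  have hv1 : OthersApart v a k := hv.othersApart_powM_padMorph
  have hw1 : OthersApart w b j := hw.othersApart_powM_padMorph
  have hw2 : RunsAtMost w b (1 + j) := (hv1.runsAtMost hk hab.symm).of_isSeqImage_powM_padMorph hw
  have hy1 : OthersApart y a i := hy.othersApart_powM_padMorph
  have hy2 : RunsAtMost y a (1 + i) := (hw1.runsAtMost hj hab).of_isSeqImage_powM_padMorph hy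
  refine ⟨hy1, by rwa [add_comm] at hy2, ?_⟩
  rintro rfl
  rw [powM_one] at hy
  exact (hy.gapsBoundedBy_padMorph hab (hw1.mono hj) hw2).mono (by omega)

lemma IsSeqImage.sturmian_gaps (hab : a ≠ b) (hi : 0 < i) (hj : 0 < j) (hk : 0 < k)
    (h : IsSeqImage
      (compM (powM (padMorph a) i) (compM (powM (padMorph b) j) (powM (padMorph a) k))) x y) :
    (∀ p, ¬ OccursAt y [b, b] p) ∧ GapsBoundedBy y [a, b] (i + 2) ∧
      GapsBoundedBy y [b, a] (i + 2) ∧ (i = 1 → GapsBoundedBy y [a, a] (2 * j + 3)) ∧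
      (2 ≤ i → GapsBoundedBy y [a, a] 3) := by
  obtain ⟨hsep, hrun, hone⟩ := h.sturmian_structure hab hj hk
  have hsep1 := hsep.mono hi
  exact ⟨hsep1.not_occursAt_pair hab.symm, hsep1.gapsBoundedBy_pair_left hab hrun,
    hsep1.gapsBoundedBy_pair_right hab hrun, hone,
    fun hi2 => (hsep.mono hi2).gapsBoundedBy_pair_three⟩

lemma IsSeqImage.sturmian_gapsBoundedBy (hab : a ≠ b) (hi : 0 < i) (hj : 0 < j) (hk : 0 < k)
    (h : IsSeqImage
      (compM (powM (padMorph a) i) (compM (powM (padMorph b) j) (powM (padMorph a) k))) x y)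
    {u : List (Fin 2)} (hu : u.length = 2) (hocc : Occurs y u) :
    GapsBoundedBy y u (2 * max i j + 3) := by
  obtain ⟨hbb, hab', hba, hone, htwo⟩ := h.sturmian_gaps hab hi hj hk
  obtain ⟨c, d, rfl⟩ := List.length_eq_two.1 hu
  obtain ⟨rfl | rfl, rfl | rfl⟩ : (c = a ∨ c = b) ∧ (d = a ∨ d = b) := ⟨by omega, by omega⟩
  · rcases Nat.lt_or_ge i 2 with hi2 | hi2
    · exact (hone (by omega)).mono (by omega)
    · exact (htwo hi2).mono (by omega)
  · exact hab'.mono (by omega)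
  · exact hba.mono (by omega)
  · exact absurd hocc.choose_spec (hbb _)

end Sturmian

/-- For positive `i, j, k` and `y = τ^i σ^j τ^k(x)`: the words of length 2 occurring in
`y` belong to `{00, 01, 10}` and occur with gaps at most `2·max{i,j,k}+3`; more
precisely the gaps of `01` and `10` are at most `i+2`, and those of `00` are at most
`2j+3` if `i = 1` and at most `3` if `i ≥ 2`. The same bound `2·max{i,j,k}+3` holds
for `y' = σ^i τ^j σ^k(x)`. -/
theorem sturmian_block_gaps (i j k : ℕ) (hi : 0 < i) (hj : 0 < j) (hk : 0 < k)
    (x y : ℕ → Fin 2)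
    (hy : IsSeqImage (compM (powM tau2 i) (compM (powM sigma2 j) (powM tau2 k))) x y) :
    (∀ u : List (Fin 2), u.length = 2 → Occurs y u →
        u ∈ ({[0, 0], [0, 1], [1, 0]} : Set (List (Fin 2)))) ∧
    (∀ u : List (Fin 2), u.length = 2 → Occurs y u →
        GapsBoundedBy y u (2 * max i (max j k) + 3)) ∧
    GapsBoundedBy y [0, 1] (i + 2) ∧
    GapsBoundedBy y [1, 0] (i + 2) ∧
    (i = 1 → GapsBoundedBy y [0, 0] (2 * j + 3)) ∧
    (2 ≤ i → GapsBoundedBy y [0, 0] 3) ∧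
    (∀ y' : ℕ → Fin 2,
        IsSeqImage (compM (powM sigma2 i) (compM (powM tau2 j) (powM sigma2 k))) x y' →
        ∀ u : List (Fin 2), u.length = 2 → Occurs y' u →
          GapsBoundedBy y' u (2 * max i (max j k) + 3)) := by
  rw [tau2_eq_padMorph, sigma2_eq_padMorph] at hy ⊢
  have hne : (0 : Fin 2) ≠ 1 := by decide
  have hmax : 2 * max i j + 3 ≤ 2 * max i (max j k) + 3 := by omega
  obtain ⟨h11, hgap01, hgap10, hone, htwo⟩ := hy.sturmian_gaps hne hi hj hk
  refine ⟨fun u hu hocc => ?_,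
    fun u hu hocc => (hy.sturmian_gapsBoundedBy hne hi hj hk hu hocc).mono hmax,
    hgap01, hgap10, hone, htwo,
    fun y' hy' u hu hocc => (hy'.sturmian_gapsBoundedBy hne.symm hi hj hk hu hocc).mono hmax⟩
  obtain ⟨c, d, rfl⟩ := List.length_eq_two.1 hu
  fin_cases c <;> fin_cases d
  · simp
  · simp
  · simp
  · exact absurd hocc.choose_spec (h11 _)

end DurandLR
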